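/- Let f be an unbounded modulus function such that the limit lim_{n → ∞} f(n)/f(2n) exists. Then the statistical ideal 𝔍_s equals the f-ideal 𝔍_f if and only if lim_{n → ∞} f(n)/f(2n) < 1. -/

import Mathlib

/-!
Subadditivity gives `f (k x) ≤ k f x`, so a small `f`-density forces a small natural density:
`𝔍_f ⊆ 𝔍_s` always. The ratio `f n / f (2ᵏ n)` tends to `aᵏ`. If `a < 1` and `α_A(n) ≤ n / 2ᵏ`,
then `f (α_A n) / f n ≤ f m / f (2ᵏ m)` with `m = ⌊n / 2ᵏ⌋`, which is eventually small, so
`𝔍_s ⊆ 𝔍_f`. If `a = 1`, pick `mₖ` growing at least geometrically with `f mₖ / f (2ᵏ mₖ) > 1/2`: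
the union of the blocks `((2ᵏ - 1) mₖ, 2ᵏ mₖ]` has density zero (a block is a `2⁻ᵏ` fraction of
its right end, and the earlier blocks together are at most twice the last one), while its
`f`-density at `2ᵏ mₖ` exceeds `1/2`.
-/

open Filter Set Topology

/-- `f : ℝ → ℝ` (viewed on `ℝ⁺`) is an unbounded modulus function. -/
def IsModulus (f : ℝ → ℝ) : Prop :=
  (∀ x : ℝ, 0 ≤ x → 0 ≤ f x) ∧
  (∀ x : ℝ, 0 ≤ x → (f x = 0 ↔ x = 0)) ∧
  (∀ x y : ℝ, 0 ≤ x → 0 ≤ y → f (x + y) ≤ f x + f y) ∧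
  (∀ x y : ℝ, 0 ≤ x → x ≤ y → f x ≤ f y) ∧
  ContinuousWithinAt f (Set.Ici 0) 0 ∧
  Tendsto (fun n : ℕ => f n) atTop atTop

/-- `α_A(n) = |A ∩ [1,n]|`. -/
noncomputable def alphaCount (A : Set ℕ) (n : ℕ) : ℕ := (A ∩ Set.Icc 1 n).ncard

/-- The statistical ideal: sets of natural density zero. -/
def statIdeal : Set (Set ℕ) :=
  {A | Tendsto (fun n : ℕ => (alphaCount A n : ℝ) / n) atTop (nhds 0)}

/-- The `f`-ideal: sets of `f`-density zero. -/
def fIdeal (f : ℝ → ℝ) : Set (Set ℕ) :=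
  {A | Tendsto (fun n : ℕ => f (alphaCount A n) / f n) atTop (nhds 0)}

/-- `g_f(k) = limsup_n f(n)/f(2^k n)`. -/
noncomputable def gmod (f : ℝ → ℝ) (k : ℕ) : ℝ :=
  Filter.limsup (fun n : ℕ => f n / f (2 ^ k * n)) atTop

/-- `h_f(t) = limsup_n f(n)/f(t n)` for real `t`. -/
noncomputable def hmod (f : ℝ → ℝ) (t : ℝ) : ℝ :=
  Filter.limsup (fun n : ℕ => f n / f (t * n)) atTop

namespace IsModulus

variable {f : ℝ → ℝ}

theorem nonneg (hf : IsModulus f) {x : ℝ} (hx : 0 ≤ x) : 0 ≤ f x := hf.1 x hx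

theorem pos (hf : IsModulus f) {x : ℝ} (hx : 0 < x) : 0 < f x :=
  (hf.nonneg hx.le).lt_of_ne fun h => hx.ne' ((hf.2.1 x hx.le).1 h.symm)

theorem mono (hf : IsModulus f) {x y : ℝ} (hx : 0 ≤ x) (hxy : x ≤ y) : f x ≤ f y :=
  hf.2.2.2.1 x y hx hxy

theorem apply_nat_mul_le (hf : IsModulus f) (k : ℕ) {x : ℝ} (hx : 0 ≤ x) :
    f (k * x) ≤ k * f x := by
  induction k with
  | zero => simp [(hf.2.1 0 le_rfl).2 rfl]
  | succ k ih =>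
    calc f ((k + 1 : ℕ) * x) = f (k * x + x) := by push_cast; ring_nf
      _ ≤ f (k * x) + f x := hf.2.2.1 _ _ (by positivity) hx
      _ ≤ (k + 1 : ℕ) * f x := by push_cast; linarith

theorem nat_mul_lt_of_div_lt (hf : IsModulus f) {k : ℕ} {x y : ℝ} (hx : 0 ≤ x) (hy : 0 < y)
    (h : f x / f y < 1 / k) : k * x < y := by
  rcases Nat.eq_zero_or_pos k with rfl | hk
  · simpa using hy
  by_contra! hle
  have : f y ≤ k * f x := (hf.mono hy.le hle).trans (hf.apply_nat_mul_le k hx)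
  rw [div_lt_div_iff₀ (hf.pos hy) (by exact_mod_cast hk)] at h
  linarith

theorem tendsto_div_two_pow_mul (hf : IsModulus f) {a : ℝ}
    (h : Tendsto (fun n : ℕ => f n / f (2 * n)) atTop (𝓝 a)) (k : ℕ) :
    Tendsto (fun n : ℕ => f n / f (2 ^ k * n)) atTop (𝓝 (a ^ k)) := by
  induction k with
  | zero =>
    refine tendsto_const_nhds.congr' ?_
    filter_upwards [eventually_gt_atTop 0] with n hn
    simp only [pow_zero, one_mul, div_self (hf.pos (Nat.cast_pos.2 hn)).ne']
  | succ k ih =>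
    have hstep : Tendsto (fun n : ℕ => f (2 ^ k * n) / f (2 ^ (k + 1) * n)) atTop (𝓝 a) := by
      refine (h.comp (tendsto_id.const_mul_atTop' (Nat.two_pow_pos k))).congr fun n => ?_
      simp only [Function.comp_apply, id_eq, Nat.cast_mul, Nat.cast_pow, Nat.cast_ofNat, pow_succ]
      ring_nf
    refine (ih.mul hstep).congr' ?_
    filter_upwards [eventually_gt_atTop 0] with n hn
    rw [div_mul_div_cancel₀ (hf.pos (by positivity)).ne']

theorem le_one_of_tendsto_div_two_mul (hf : IsModulus f) {a : ℝ}
    (h : Tendsto (fun n : ℕ => f n / f (2 * n)) atTop (𝓝 a)) : a ≤ 1 := by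
  refine le_of_tendsto h ?_
  filter_upwards [eventually_gt_atTop 0] with n hn
  have hn : (0 : ℝ) < n := by exact_mod_cast hn
  exact (div_le_one (hf.pos (by positivity))).2 (hf.mono hn.le (by linarith))

end IsModulus

theorem alphaCount_le_self (A : Set ℕ) (n : ℕ) : alphaCount A n ≤ n :=
  (ncard_le_ncard inter_subset_right (finite_Icc 1 n)).trans (by simp)

theorem mem_statIdeal_of_forall_eventually_mul_le {A : Set ℕ} (C : ℕ)
    (h : ∀ j : ℕ, ∀ᶠ n in atTop, j * alphaCount A n ≤ C * n) : A ∈ statIdeal := by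
  refine tendsto_order.2 ⟨fun b hb => .of_forall fun n => hb.trans_le (by positivity),
    fun ε hε => ?_⟩
  obtain ⟨j, hj⟩ := exists_nat_gt (C / ε)
  filter_upwards [h j, eventually_gt_atTop 0] with n hjn hn
  have hn : (0 : ℝ) < n := Nat.cast_pos.2 hn
  have hjn : (j : ℝ) * alphaCount A n ≤ C * n := by exact_mod_cast hjn
  rw [div_lt_iff₀ hε] at hj
  rw [div_lt_iff₀ hn]
  nlinarith

theorem le_alphaCount_iUnion_Ioc (D N : ℕ → ℕ) (k : ℕ) :
    N k - D k ≤ alphaCount (⋃ i, Ioc (D i) (N i)) (N k) := by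
  rw [← ncard_Ioc_nat]
  refine ncard_le_ncard (fun x hx => ⟨mem_iUnion.2 ⟨k, hx⟩, ?_, hx.2⟩)
    ((finite_Icc _ _).inter_of_right _)
  exact Nat.zero_lt_of_lt hx.1

theorem alphaCount_iUnion_Ioc_le {D N : ℕ → ℕ} (hD : Monotone D) (hN : Monotone N) (j n : ℕ) :
    alphaCount (⋃ i, Ioc (D i) (N i)) n ≤
      alphaCount (⋃ i, Ioc (D i) (N i)) (N j) + (n - D (j + 1)) := by
  set A := ⋃ i, Ioc (D i) (N i)
  have hsub : A ∩ Icc 1 n ⊆ (A ∩ Icc 1 (N j)) ∪ Ioc (D (j + 1)) n := by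
    rintro x ⟨hx, hx1, hxn⟩
    obtain ⟨i, hxi⟩ := mem_iUnion.1 hx
    rcases le_or_gt i j with hij | hji
    · exact Or.inl ⟨hx, hx1, hxi.2.trans (hN hij)⟩
    · exact Or.inr ⟨(hD hji).trans_lt hxi.1, hxn⟩
  calc alphaCount A n ≤ ((A ∩ Icc 1 (N j)) ∪ Ioc (D (j + 1)) n).ncard :=
        ncard_le_ncard hsub (((finite_Icc _ _).inter_of_right _).union (finite_Ioc _ _))
    _ ≤ alphaCount A (N j) + (Ioc (D (j + 1)) n).ncard := ncard_union_le _ _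
    _ = alphaCount A (N j) + (n - D (j + 1)) := by rw [ncard_Ioc_nat]

theorem Monotone.exists_le_lt_succ {N : ℕ → ℕ} (hN : Monotone N) (hunb : ∀ n, ∃ i, n < N i)
    {j n : ℕ} (hj : N j ≤ n) : ∃ i, j ≤ i ∧ N i ≤ n ∧ n < N (i + 1) := by
  classical
  have hex := hunb n
  have hj' : j < Nat.find hex := by
    by_contra! hle
    exact (Nat.find_spec hex).not_ge ((hN hle).trans hj)
  obtain ⟨i, hi⟩ := Nat.exists_eq_add_one_of_ne_zero (Nat.zero_lt_of_lt hj').ne'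
  refine ⟨i, by omega, ?_, hi ▸ Nat.find_spec hex⟩
  exact not_lt.1 (Nat.find_min hex (by omega))

theorem lt_two_pow_mul {m : ℕ} (hm : 0 < m) (k : ℕ) : k < 2 ^ k * m :=
  Nat.lt_two_pow_self.trans_le (Nat.le_mul_of_pos_right _ hm)

theorem two_pow_mul_sub_sub_one_mul (m k : ℕ) : 2 ^ k * m - (2 ^ k - 1) * m = m := by
  rw [Nat.sub_one_mul, Nat.sub_sub_self (Nat.le_mul_of_pos_left m (Nat.two_pow_pos k))]

def dyadicBlocks (m : ℕ → ℕ) : Set ℕ :=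
  ⋃ k, Ioc ((2 ^ k - 1) * m k) (2 ^ k * m k)

section DyadicBlocks

variable {m : ℕ → ℕ}

theorem le_alphaCount_dyadicBlocks (k : ℕ) : m k ≤ alphaCount (dyadicBlocks m) (2 ^ k * m k) := by
  have := le_alphaCount_iUnion_Ioc (fun i => (2 ^ i - 1) * m i) (fun i => 2 ^ i * m i) k
  rwa [two_pow_mul_sub_sub_one_mul] at this

theorem monotone_two_pow_mul (hm : Monotone m) : Monotone fun k => 2 ^ k * m k :=
  fun _ _ hij => Nat.mul_le_mul (Nat.pow_le_pow_right two_pos hij) (hm hij)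

theorem monotone_two_pow_sub_one_mul (hm : Monotone m) : Monotone fun k => (2 ^ k - 1) * m k :=
  fun _ _ hij => Nat.mul_le_mul (Nat.sub_le_sub_right (Nat.pow_le_pow_right two_pos hij) 1) (hm hij)

theorem monotone_of_two_mul_le (hm : ∀ k, 2 * m k ≤ m (k + 1)) : Monotone m :=
  monotone_nat_of_le_succ fun k => by linarith [hm k]

theorem pos_of_two_mul_le (hm : ∀ k, 2 * m k ≤ m (k + 1)) (hm0 : 0 < m 0) (k : ℕ) : 0 < m k :=
  hm0.trans_le (monotone_of_two_mul_le hm k.zero_le)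

theorem alphaCount_dyadicBlocks_le_add (hm : ∀ k, 2 * m k ≤ m (k + 1)) (j n : ℕ) :
    alphaCount (dyadicBlocks m) n ≤
      alphaCount (dyadicBlocks m) (2 ^ j * m j) + (n - (2 ^ (j + 1) - 1) * m (j + 1)) :=
  alphaCount_iUnion_Ioc_le (monotone_two_pow_sub_one_mul (monotone_of_two_mul_le hm))
    (monotone_two_pow_mul (monotone_of_two_mul_le hm)) j n

theorem alphaCount_dyadicBlocks_le (hm : ∀ k, 2 * m k ≤ m (k + 1)) (j : ℕ) :
    alphaCount (dyadicBlocks m) (2 ^ j * m j) ≤ 2 * m j := by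
  induction j with
  | zero => simpa using (alphaCount_le_self _ _).trans (Nat.le_mul_of_pos_left (m 0) two_pos)
  | succ j ih =>
    have := alphaCount_dyadicBlocks_le_add hm j (2 ^ (j + 1) * m (j + 1))
    rw [two_pow_mul_sub_sub_one_mul] at this
    linarith [hm j]

theorem two_pow_mul_alphaCount_dyadicBlocks_le (hm : ∀ k, 2 * m k ≤ m (k + 1)) {j n : ℕ}
    (hjn : 2 ^ j * m j ≤ n) (hnj : n ≤ 2 ^ (j + 1) * m (j + 1)) :
    2 ^ j * alphaCount (dyadicBlocks m) n ≤ 3 * n := by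
  set D := (2 ^ (j + 1) - 1) * m (j + 1)
  have htail : 2 ^ j * (n - D) ≤ n := by
    rcases le_or_gt n D with hnD | hnD
    · simp [Nat.sub_eq_zero_of_le hnD]
    have hp : 1 ≤ 2 ^ j := Nat.one_le_two_pow
    calc 2 ^ j * (n - D) ≤ 2 ^ j * m (j + 1) := by
          have := two_pow_mul_sub_sub_one_mul (m (j + 1)) (j + 1)
          exact Nat.mul_le_mul_left _ (by omega)
      _ ≤ D := Nat.mul_le_mul_right _ (by rw [pow_succ]; omega)
      _ ≤ n := hnD.le
  calc 2 ^ j * alphaCount (dyadicBlocks m) n ≤ 2 ^ j * (2 * m j + (n - D)) :=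
        Nat.mul_le_mul_left _ ((alphaCount_dyadicBlocks_le_add hm j n).trans
          (Nat.add_le_add_right (alphaCount_dyadicBlocks_le hm j) _))
    _ = 2 * (2 ^ j * m j) + 2 ^ j * (n - D) := by ring
    _ ≤ 3 * n := by omega

theorem dyadicBlocks_mem_statIdeal (hm : ∀ k, 2 * m k ≤ m (k + 1)) (hm0 : 0 < m 0) :
    dyadicBlocks m ∈ statIdeal := by
  refine mem_statIdeal_of_forall_eventually_mul_le 3 fun j => ?_
  filter_upwards [eventually_ge_atTop (2 ^ j * m j)] with n hn
  obtain ⟨i, hji, hin, hni⟩ := (monotone_two_pow_mul (monotone_of_two_mul_le hm)).exists_le_lt_succ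
    (fun k => ⟨k, lt_two_pow_mul (pos_of_two_mul_le hm hm0 k) k⟩) hn
  calc j * alphaCount (dyadicBlocks m) n ≤ 2 ^ i * alphaCount (dyadicBlocks m) n :=
        Nat.mul_le_mul_right _ (Nat.lt_two_pow_self.le.trans (Nat.pow_le_pow_right two_pos hji))
    _ ≤ 3 * n := two_pow_mul_alphaCount_dyadicBlocks_le hm hin hni.le

end DyadicBlocks

theorem exists_two_mul_le_succ_ge (M : ℕ → ℕ) :
    ∃ m : ℕ → ℕ, 0 < m 0 ∧ (∀ k, 2 * m k ≤ m (k + 1)) ∧ ∀ k, M k ≤ m k := by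
  refine ⟨fun k => 2 ^ k * (∑ i ∈ Finset.range (k + 1), M i + 1), by positivity, fun k => ?_,
    fun k => ?_⟩
  · dsimp only
    rw [pow_succ, mul_comm _ 2, mul_assoc]
    exact Nat.mul_le_mul_left 2 (Nat.mul_le_mul_left _ (by simp [Finset.sum_range_succ _ (k + 1)]))
  · calc M k ≤ ∑ i ∈ Finset.range (k + 1), M i + 1 :=
          (Finset.single_le_sum (by simp) (Finset.self_mem_range_succ k)).trans (Nat.le_succ _)
      _ ≤ _ := Nat.le_mul_of_pos_left _ (Nat.two_pow_pos k)

section Ideals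

variable {f : ℝ → ℝ}

theorem fIdeal_subset_statIdeal (hf : IsModulus f) : fIdeal f ⊆ statIdeal := by
  intro A hA
  refine tendsto_order.2 ⟨fun b hb => .of_forall fun n => hb.trans_le (by positivity),
    fun ε hε => ?_⟩
  obtain ⟨k, hk⟩ := exists_nat_one_div_lt hε
  filter_upwards [(tendsto_order.1 hA).2 (1 / (k + 1 : ℕ)) (by positivity),
    eventually_gt_atTop 0] with n hfn hn
  have hn : (0 : ℝ) < n := Nat.cast_pos.2 hn
  have hlt := hf.nat_mul_lt_of_div_lt (Nat.cast_nonneg _) hn hfn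
  push_cast at hlt
  calc (alphaCount A n : ℝ) / n < 1 / (k + 1) := by
        rw [div_lt_div_iff₀ hn (by positivity)]; linarith
    _ < ε := hk

theorem statIdeal_subset_fIdeal (hf : IsModulus f)
    (h : ∀ ε > 0, ∃ k : ℕ, ∀ᶠ m : ℕ in atTop, f m / f (2 ^ k * m) < ε) :
    statIdeal ⊆ fIdeal f := by
  intro A hA
  refine tendsto_order.2 ⟨fun b hb => .of_forall fun n =>
    hb.trans_le (div_nonneg (hf.nonneg (Nat.cast_nonneg _)) (hf.nonneg (Nat.cast_nonneg _))),
    fun ε hε => ?_⟩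
  obtain ⟨k, hk⟩ := h ε hε
  filter_upwards [(tendsto_order.1 hA).2 (1 / 2 ^ k) (by positivity),
    (Nat.tendsto_div_const_atTop (Nat.two_pow_pos k).ne').eventually
      (hk.and (eventually_gt_atTop 0))] with n hαn ⟨hfm, hm⟩
  have hn : 0 < n := Nat.pos_of_div_pos hm
  have hαm : alphaCount A n ≤ n / 2 ^ k := by
    rw [div_lt_div_iff₀ (Nat.cast_pos.2 hn) (by positivity), one_mul] at hαn
    exact (Nat.le_div_iff_mul_le (Nat.two_pow_pos k)).2 (by exact_mod_cast hαn.le)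
  have hmn : ((2 ^ k * (n / 2 ^ k) : ℕ) : ℝ) ≤ n := by exact_mod_cast Nat.mul_div_le n (2 ^ k)
  push_cast at hmn
  calc f (alphaCount A n) / f n ≤ f ↑(n / 2 ^ k) / f (2 ^ k * ↑(n / 2 ^ k)) :=
        div_le_div₀ (hf.nonneg (Nat.cast_nonneg _)) (hf.mono (Nat.cast_nonneg _)
          (by exact_mod_cast hαm)) (hf.pos (by positivity)) (hf.mono (by positivity) hmn)
    _ < ε := hfm

theorem exists_mem_statIdeal_not_mem_fIdeal (hf : IsModulus f) {c : ℝ} (hc : 0 < c)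
    (h : ∀ k : ℕ, ∀ᶠ m : ℕ in atTop, c < f m / f (2 ^ k * m)) :
    ∃ A ∈ statIdeal, A ∉ fIdeal f := by
  choose M hM using fun k => eventually_atTop.1 (h k)
  obtain ⟨m, hm0, hm, hMm⟩ := exists_two_mul_le_succ_ge M
  have hm_pos := pos_of_two_mul_le hm hm0
  refine ⟨dyadicBlocks m, dyadicBlocks_mem_statIdeal hm hm0, fun hA => ?_⟩
  have hN : Tendsto (fun k => 2 ^ k * m k) atTop atTop :=
    tendsto_atTop_mono (fun k => (lt_two_pow_mul (hm_pos k) k).le) tendsto_id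
  obtain ⟨k, hk⟩ := (hN.eventually ((tendsto_order.1 hA).2 c hc)).exists
  push_cast at hk
  have hNpos : (0 : ℝ) < 2 ^ k * m k := by have := hm_pos k; positivity
  have hblock : f (m k) ≤ f (alphaCount (dyadicBlocks m) (2 ^ k * m k)) :=
    hf.mono (Nat.cast_nonneg _) (by exact_mod_cast le_alphaCount_dyadicBlocks k)
  have := div_le_div_of_nonneg_right hblock (hf.pos hNpos).le
  linarith [hM k (m k) (hMm k)]

end Ideals

theorem statIdeal_eq_fIdeal_iff_lt_one (f : ℝ → ℝ) (hf : IsModulus f) (a : ℝ)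
    (h : Tendsto (fun n : ℕ => f n / f (2 * n)) atTop (nhds a)) :
    statIdeal = fIdeal f ↔ a < 1 := by
  refine ⟨fun heq => ?_, fun ha => ?_⟩
  · by_contra! ha
    have ha1 : a = 1 := (hf.le_one_of_tendsto_div_two_mul h).antisymm ha
    obtain ⟨A, hA, hAf⟩ := exists_mem_statIdeal_not_mem_fIdeal hf one_half_pos fun k => by
      have := hf.tendsto_div_two_pow_mul h k
      rw [ha1, one_pow] at this
      exact this.eventually_const_lt one_half_lt_one
    exact hAf (heq ▸ hA)
  · refine (statIdeal_subset_fIdeal hf fun ε hε => ?_).antisymm (fIdeal_subset_statIdeal hf)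
    obtain ⟨k, hk⟩ := exists_pow_lt_of_lt_one hε ha
    exact ⟨k, (hf.tendsto_div_two_pow_mul h k).eventually_lt_const hk⟩
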